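/- arXiv:math/0501085 — 3 statements merged into one kernel-verified Lean document; each statement's English description precedes it below -/
import Mathlib

section
/- Assume the inductive setting, with f an element of Sym(Z), and let V be the subgroup of Sym(Z) generated by H₁ together with f. Then every nontrivial normal subgroup N of V contains a subgroup S together with a surjective group homomorphism from S onto L₀. -/
/-- A pre-wreath structure `(Z, Y, H, X)`: `H` is a nontrivial subgroup of `Sym(Z)`,
`X ⊆ Y ⊆ Z`, `X` nonempty, every element of `H` fixes every point outside `Y`,
if `Xh` meets `X` then `h` is the identity on `X`, and every nontrivial `h ∈ H`
moves some set `Xj` (`j ∈ H`). (Images are written with Lean's left action, so the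
set `Xh` of the paper is `⇑h '' X`.) -/
def IsPreWreath {Z : Type*} (Y : Set Z) (H : Subgroup (Equiv.Perm Z)) (X : Set Z) : Prop :=
  H ≠ ⊥ ∧
  (∀ h ∈ H, ∀ z : Z, z ∉ Y → h z = z) ∧
  X ⊆ Y ∧
  X.Nonempty ∧
  (∀ h ∈ H, (⇑h '' X ∩ X).Nonempty → ∀ x ∈ X, h x = x) ∧
  (∀ h ∈ H, h ≠ 1 → ∃ j ∈ H, ⇑h '' (⇑j '' X) ≠ ⇑j '' X)

/-- The carrier `XH = {Xh : h ∈ H}` of a pre-wreath structure. -/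
def wreathCarrier {Z : Type*} (H : Subgroup (Equiv.Perm Z)) (X : Set Z) : Set (Set Z) :=
  {A : Set Z | ∃ h ∈ H, A = ⇑h '' X}

/-- The support of a subgroup of `Sym(Z)`: the points moved by some element. -/
def Supp {Z : Type*} (K : Subgroup (Equiv.Perm Z)) : Set Z :=
  {z : Z | ∃ g ∈ K, g z ≠ z}

/-- The inductive setting: `(Z, fY₀, H₁, Y₀)` is a pre-wreath structure (`Y₁ = Y₀f` is
the image of `Y₀` under the bijection `f`), `Y₀ ⊆ Supp(H₁) ⊆ Y₁` with `Supp(H₁) ≠ Y₁`,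
and `W₀` is a nonempty subset of `Y₀` whose image under `f` misses `Supp(H₁)`. -/
def InductiveSetting {Z : Type*} (H₁ : Subgroup (Equiv.Perm Z)) (f : Equiv.Perm Z)
    (Y₀ W₀ : Set Z) : Prop :=
  IsPreWreath (⇑f '' Y₀) H₁ Y₀ ∧
  Y₀ ⊆ Supp H₁ ∧ Supp H₁ ⊆ ⇑f '' Y₀ ∧ Supp H₁ ≠ ⇑f '' Y₀ ∧
  W₀.Nonempty ∧ W₀ ⊆ Y₀ ∧ (⇑f '' W₀) ∩ Supp H₁ = ∅

/-- `Hᵢ`, the conjugate of `H₁` carried over by `f^(i-1)`: this is the paper's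
`f^{-(i-1)} H₁ f^{i-1}` written in right-action notation, i.e. the subgroup
`{f^(i-1) h f^(-(i-1)) : h ∈ H₁}` of permutations acting on the left. -/
def Hseq {Z : Type*} (H₁ : Subgroup (Equiv.Perm Z)) (f : Equiv.Perm Z) (i : ℤ) :
    Subgroup (Equiv.Perm Z) :=
  Subgroup.map (MulAut.conj (f ^ (i - 1))).toMonoidHom H₁

/-- `R_j`, the subgroup generated by the `Hᵢ` with `i ≥ j`. -/
def Rseq {Z : Type*} (H₁ : Subgroup (Equiv.Perm Z)) (f : Equiv.Perm Z) (j : ℤ) :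
    Subgroup (Equiv.Perm Z) :=
  Subgroup.closure (⋃ i ∈ {i : ℤ | j ≤ i}, (Hseq H₁ f i : Set (Equiv.Perm Z)))

/-- `Lᵢ`, the subgroup generated by the `H_j` with `j < i`. -/
def Lseq {Z : Type*} (H₁ : Subgroup (Equiv.Perm Z)) (f : Equiv.Perm Z) (i : ℤ) :
    Subgroup (Equiv.Perm Z) :=
  Subgroup.closure (⋃ j ∈ {j : ℤ | j < i}, (Hseq H₁ f j : Set (Equiv.Perm Z)))

/-- `M`, the subgroup generated by all the `Hᵢ`, `i ∈ ℤ`. -/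
def Mgrp {Z : Type*} (H₁ : Subgroup (Equiv.Perm Z)) (f : Equiv.Perm Z) :
    Subgroup (Equiv.Perm Z) :=
  Subgroup.closure (⋃ i : ℤ, (Hseq H₁ f i : Set (Equiv.Perm Z)))

/-- `Wᵢ = W₀fⁱ`, the image of `W₀` under the `i`-th power of `f`. -/
def Wseq {Z : Type*} (W₀ : Set Z) (f : Equiv.Perm Z) (i : ℤ) : Set Z :=
  ⇑(f ^ i) '' W₀

/-!
Since `f` normalizes `M = ⟨Hᵢ : i ∈ ℤ⟩`, every element of `V` is `m fᵏ` with `m ∈ M`. First, `N`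
meets `M` nontrivially: if `n = m fᵏ ∈ N` with `k > 0`, choose `t` beyond the finitely many `Hᵢ`
involved in `m`, a point `z ∈ W_t ⊆ Y_t` and `u ∈ H_{t+1}` moving `z`; then `u` fixes
`n z = fᵏ z ∈ W_{t+k}`, so `[n, u] ∈ N ∩ M` is nontrivial.

Next, a nontrivial element of `⟨Hᵢ : i ∈ s⟩`, `s` finite, moves some `V`-translate `c Y₋₁` off
itself. Induct on `a = max s`: `⟨Hᵢ : i ∈ s⟩` acts as a subgroup of the wreath product of
`⟨Hᵢ : i ∈ s, i < a⟩` (supported on `Y_{a-1}`) by `H_a` (permuting the blocks `h Y_{a-1}`). Either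
its top component moves a block, which is then disjoint from its image by the pre-wreath axioms,
or it is trivial and some base component is nontrivial, and the induction hypothesis applies.

Conjugating, some `g ∈ N` moves `Y₋₁` off itself. As `L₀` is supported on `Y₋₁`, the groups `L₀` and
`g L₀ g⁻¹` have disjoint supports, so `L₀ × g L₀ g⁻¹` embeds in `Sym(Z)`. Its intersection with `N`
contains the commutators `[l, g] = l · g l⁻¹ g⁻¹`, so the first projection maps it onto `L₀`.
-/

open Equiv

section Perm

variable {Z : Type*}

theorem Equiv.Perm.mem_fixingSubgroup_iff_apply_eq {g : Perm Z} {s : Set Z} :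
    g ∈ fixingSubgroup (Perm Z) s ↔ ∀ z ∈ s, g z = z := by
  simp only [mem_fixingSubgroup_iff, Perm.smul_def]

theorem Equiv.Perm.image_eq_of_mem_fixingSubgroup_compl {g : Perm Z} {A : Set Z}
    (hg : g ∈ fixingSubgroup (Perm Z) Aᶜ) : ⇑g '' A = A :=
  Set.image_perm fun z hz => not_not.mp fun h => hz (mem_fixingSubgroup_iff_apply_eq.mp hg z h)

theorem Equiv.Perm.apply_mem_iff_of_mem_fixingSubgroup_compl {g : Perm Z} {A : Set Z}
    (hg : g ∈ fixingSubgroup (Perm Z) Aᶜ) (z : Z) : g z ∈ A ↔ z ∈ A := by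
  conv_lhs => rw [← Perm.image_eq_of_mem_fixingSubgroup_compl hg]
  exact g.injective.mem_set_image

theorem Equiv.Perm.disjoint_of_mem_fixingSubgroup_compl {g h : Perm Z} {A B : Set Z}
    (hg : g ∈ fixingSubgroup (Perm Z) Aᶜ) (hh : h ∈ fixingSubgroup (Perm Z) Bᶜ)
    (hAB : _root_.Disjoint A B) : g.Disjoint h := by
  rw [mem_fixingSubgroup_iff_apply_eq] at hg hh
  intro z
  by_cases hz : z ∈ A
  · exact Or.inr (hh z (Set.disjoint_left.mp hAB hz))
  · exact Or.inl (hg z hz)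

theorem map_conj_le_fixingSubgroup_compl_image {K : Subgroup (Perm Z)} {A : Set Z}
    (hK : K ≤ fixingSubgroup (Perm Z) Aᶜ) (σ : Perm Z) :
    K.map (MulAut.conj σ).toMonoidHom ≤ fixingSubgroup (Perm Z) (⇑σ '' A)ᶜ := by
  rintro _ ⟨k, hk, rfl⟩
  rw [Perm.mem_fixingSubgroup_iff_apply_eq]
  intro z hz
  have hσz : σ.symm z ∉ A := fun h => hz ⟨_, h, σ.apply_symm_apply z⟩
  simp [Perm.mem_fixingSubgroup_iff_apply_eq.mp (hK hk) _ hσz]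

theorem le_fixingSubgroup_compl_Supp (K : Subgroup (Perm Z)) :
    K ≤ fixingSubgroup (Perm Z) (Supp K)ᶜ := fun k hk =>
  Perm.mem_fixingSubgroup_iff_apply_eq.mpr fun _ hz => not_not.mp fun h => hz ⟨k, hk, h⟩

theorem Supp_map_conj (K : Subgroup (Perm Z)) (σ : Perm Z) :
    Supp (K.map (MulAut.conj σ).toMonoidHom) = ⇑σ '' Supp K := by
  ext z
  simp only [Supp, Subgroup.mem_map, Set.mem_ofPred_eq, Set.mem_image]
  constructor
  · rintro ⟨_, ⟨k, hk, rfl⟩, hkz⟩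
    refine ⟨σ.symm z, ⟨k, hk, fun h => hkz ?_⟩, σ.apply_symm_apply z⟩
    simp [h]
  · rintro ⟨w, ⟨k, hk, hkw⟩, rfl⟩
    exact ⟨_, ⟨k, hk, rfl⟩, by simpa using hkw⟩

theorem Equiv.Perm.image_conj_image (σ h : Perm Z) (A : Set Z) :
    ⇑((MulAut.conj σ).toMonoidHom h) '' (⇑σ '' A) = ⇑σ '' (⇑h '' A) := by
  simp [Set.image_image]

theorem disjoint_image_conj {n c : Perm Z} {A : Set Z}
    (h : Disjoint (⇑n '' (⇑c '' A)) (⇑c '' A)) : Disjoint (⇑(c⁻¹ * n * c) '' A) A := by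
  have := (Set.disjoint_image_iff (c⁻¹).injective).mpr h
  simpa [Set.image_image] using this

theorem Equiv.Perm.zpow_image_zpow_image (f : Perm Z) (a b : ℤ) (S : Set Z) :
    ⇑(f ^ a) '' (⇑(f ^ b) '' S) = ⇑(f ^ (a + b)) '' S := by
  rw [Set.image_image, zpow_add]
  rfl

theorem Equiv.Perm.zpow_image_image (f : Perm Z) (a : ℤ) (S : Set Z) :
    ⇑(f ^ a) '' (⇑f '' S) = ⇑(f ^ (a + 1)) '' S := by
  rw [Set.image_image, zpow_add_one]
  rfl

end Perm

namespace IsPreWreath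

variable {Z : Type*} {Y X : Set Z} {H : Subgroup (Perm Z)}

theorem le_fixingSubgroup (hw : IsPreWreath Y H X) : H ≤ fixingSubgroup (Perm Z) Yᶜ :=
  fun h hh => Perm.mem_fixingSubgroup_iff_apply_eq.mpr (hw.2.1 h hh)

theorem image_subset (hw : IsPreWreath Y H X) {h : Perm Z} (hh : h ∈ H) {A : Set Z}
    (hA : A ⊆ X) : ⇑h '' A ⊆ Y := by
  rw [← Perm.image_eq_of_mem_fixingSubgroup_compl (hw.le_fixingSubgroup hh)]
  exact Set.image_mono (hA.trans hw.2.2.1)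

theorem apply_eq_of_apply_mem (hw : IsPreWreath Y H X) {h : Perm Z} (hh : h ∈ H) {x : Z}
    (hx : x ∈ X) (hhx : h x ∈ X) : ∀ y ∈ X, h y = y :=
  hw.2.2.2.2.1 h hh ⟨h x, ⟨x, hx, rfl⟩, hhx⟩

theorem disjoint_image_of_ne (hw : IsPreWreath Y H X) {h u : Perm Z} (hh : h ∈ H) (hu : u ∈ H)
    (hne : ⇑h '' (⇑u '' X) ≠ ⇑u '' X) : Disjoint (⇑h '' (⇑u '' X)) (⇑u '' X) := by
  refine Set.disjoint_left.mpr ?_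
  rintro _ ⟨_, ⟨x, hx, rfl⟩, rfl⟩ ⟨y, hy, hyx⟩
  have hfix := hw.apply_eq_of_apply_mem (mul_mem (mul_mem (inv_mem hu) hh) hu) hx
    (by simpa [← hyx] using hy)
  refine hne ?_
  rw [Set.image_image]
  exact Set.image_congr fun x' hx' => by simpa [symm_apply_eq] using hfix x' hx'

theorem map_conj (hw : IsPreWreath Y H X) (σ : Perm Z) :
    IsPreWreath (⇑σ '' Y) (H.map (MulAut.conj σ).toMonoidHom) (⇑σ '' X) := by
  refine ⟨?_, fun g hg => Perm.mem_fixingSubgroup_iff_apply_eq.mp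
    (map_conj_le_fixingSubgroup_compl_image hw.le_fixingSubgroup σ hg),
    Set.image_mono hw.2.2.1, hw.2.2.2.1.image _, ?_, ?_⟩
  · exact (Subgroup.map_eq_bot_iff_of_injective _ (MulAut.conj σ).injective).not.mpr hw.1
  · rintro _ ⟨h, hh, rfl⟩ hne _ ⟨x, hx, rfl⟩
    rw [Perm.image_conj_image, ← Set.image_inter σ.injective] at hne
    simp [hw.2.2.2.2.1 h hh hne.of_image x hx]
  · rintro _ ⟨h, hh, rfl⟩ hne
    obtain ⟨j, hj, hmove⟩ := hw.2.2.2.2.2 h hh (by rintro rfl; exact hne (map_one _))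
    refine ⟨_, ⟨j, hj, rfl⟩, ?_⟩
    rw [Perm.image_conj_image, Perm.image_conj_image]
    exact fun heq => hmove (σ.injective.image_injective heq)

end IsPreWreath

section WreathForm

variable {Z : Type*} {H K : Subgroup (Perm Z)} {X : Set Z}

/-- `g` acts as the element of the permutational wreath product `K ≀ H` with top component
`t ∈ H`: like `t` off the blocks `h '' X`, and on each block through a base component `k ∈ K`. -/
def WreathForm (H K : Subgroup (Perm Z)) (X : Set Z) (g t : Perm Z) : Prop :=
  (∀ z ∉ ⋃ h ∈ H, ⇑h '' X, g z = t z) ∧ ∀ h ∈ H, ∃ k ∈ K, ∀ x ∈ X, g (h x) = t (h (k x))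

theorem WreathForm.one : WreathForm H K X 1 1 :=
  ⟨fun _ _ => rfl, fun _ _ => ⟨1, one_mem K, fun _ _ => rfl⟩⟩

theorem WreathForm.mul_left {g t : Perm Z} (hg : WreathForm H K X g t) (x : Perm Z) :
    WreathForm H K X (x * g) (x * t) := by
  refine ⟨fun z hz => by rw [Perm.mul_apply, hg.1 z hz, Perm.mul_apply], fun h hh => ?_⟩
  obtain ⟨k, hk, hgk⟩ := hg.2 h hh
  exact ⟨k, hk, fun x' hx' => by rw [Perm.mul_apply, hgk x' hx', Perm.mul_apply]⟩

end WreathForm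

namespace IsPreWreath

variable {Z : Type*} {Y X : Set Z} {H K : Subgroup (Perm Z)}

theorem wreathForm_mul_left_of_mem_base (hw : IsPreWreath Y H X)
    (hK : K ≤ fixingSubgroup (Perm Z) Xᶜ) {g t x : Perm Z} (hx : x ∈ K) (ht : t ∈ H)
    (hg : WreathForm H K X g t) : WreathForm H K X (x * g) t := by
  have hKfix : ∀ k ∈ K, ∀ z ∉ X, k z = z := fun k hk =>
    Perm.mem_fixingSubgroup_iff_apply_eq.mp (hK hk)
  have hKX : ∀ k ∈ K, ∀ x ∈ X, k x ∈ X := fun k hk x hx =>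
    (Perm.apply_mem_iff_of_mem_fixingSubgroup_compl (hK hk) x).mpr hx
  refine ⟨fun z hz => ?_, fun h hh => ?_⟩
  · rw [Perm.mul_apply, hg.1 z hz]
    refine hKfix x hx _ fun htz => hz ?_
    exact Set.mem_biUnion (inv_mem ht) ⟨t z, htz, by simp⟩
  obtain ⟨k, hk, hgk⟩ := hg.2 h hh
  -- by axiom (ii), `t * h` either fixes `X` pointwise or maps it off `X`, where `x` is trivial
  by_cases hth : ∀ x' ∈ X, t (h x') = x'
  · refine ⟨x * k, mul_mem hx hk, fun x' hx' => ?_⟩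
    rw [Perm.mul_apply, hgk x' hx', hth _ (hKX k hk x' hx'), hth _ (hKX _ (mul_mem hx hk) x' hx'),
      Perm.mul_apply]
  · obtain ⟨x₀, hx₀, hne⟩ : ∃ x₀ ∈ X, t (h x₀) ≠ x₀ := by simpa using hth
    have hoff : ∀ x' ∈ X, t (h x') ∉ X := fun x' hx' hmem =>
      hne (hw.apply_eq_of_apply_mem (mul_mem ht hh) hx' hmem x₀ hx₀)
    exact ⟨k, hk, fun x' hx' => by
      rw [Perm.mul_apply, hgk x' hx', hKfix x hx _ (hoff _ (hKX k hk x' hx'))]⟩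

theorem exists_wreathForm (hw : IsPreWreath Y H X) (hK : K ≤ fixingSubgroup (Perm Z) Xᶜ)
    {g : Perm Z} (hg : g ∈ K ⊔ H) : ∃ t ∈ H, WreathForm H K X g t := by
  have step : ∀ x ∈ (K : Set (Perm Z)) ∪ H, ∀ y : Perm Z, (∃ t ∈ H, WreathForm H K X y t) →
      ∃ t ∈ H, WreathForm H K X (x * y) t := by
    rintro x (hx | hx) y ⟨t, ht, hy⟩
    exacts [⟨t, ht, hw.wreathForm_mul_left_of_mem_base hK hx ht hy⟩,
      ⟨x * t, mul_mem hx ht, hy.mul_left x⟩]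
  rw [← K.closure_eq, ← H.closure_eq, ← Subgroup.closure_union] at hg
  induction hg using Subgroup.closure_induction_left with
  | one => exact ⟨1, one_mem H, WreathForm.one⟩
  | mul_left x hx y _ ih => exact step x hx y ih
  | inv_mul_cancel x hx y _ ih =>
    refine step x⁻¹ ?_ y ih
    rcases hx with hx | hx
    exacts [Or.inl (inv_mem (x := x) hx), Or.inr (inv_mem (x := x) hx)]

theorem exists_disjoint_image_of_mem_sup (hw : IsPreWreath Y H X)
    (hK : K ≤ fixingSubgroup (Perm Z) Xᶜ) {𝒮 : Set (Set Z)}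
    (h𝒮 : ∀ h ∈ H, ∀ A ∈ 𝒮, ⇑h '' A ∈ 𝒮) (hX : X ∈ 𝒮)
    (hK𝒮 : ∀ k ∈ K, k ≠ 1 → ∃ A ∈ 𝒮, A ⊆ X ∧ Disjoint (⇑k '' A) A)
    {g : Perm Z} (hg : g ∈ K ⊔ H) (hg1 : g ≠ 1) :
    ∃ A ∈ 𝒮, A ⊆ Y ∧ Disjoint (⇑g '' A) A := by
  obtain ⟨t, ht, hout, hblk⟩ := hw.exists_wreathForm hK hg
  have himage : ∀ h k : Perm Z, (∀ x ∈ X, g (h x) = t (h (k x))) →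
      ∀ A ⊆ X, ⇑g '' (⇑h '' A) = ⇑t '' (⇑h '' (⇑k '' A)) := fun h k hgk A hA => by
    simp only [Set.image_image]
    exact Set.image_congr fun a ha => hgk a (hA ha)
  by_cases ht1 : t = 1
  · subst ht1
    obtain ⟨z, hz⟩ : ∃ z, g z ≠ z := by
      by_contra! h
      exact hg1 (Perm.ext h)
    obtain ⟨h, hh, x, hx, rfl⟩ := Set.mem_iUnion₂.mp (not_not.mp (mt (hout z) hz))
    obtain ⟨k, hk, hgk⟩ := hblk h hh
    have hk1 : k ≠ 1 := by
      rintro rfl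
      exact hz (by simpa using hgk x hx)
    obtain ⟨A, hA, hAX, hdisj⟩ := hK𝒮 k hk hk1
    refine ⟨⇑h '' A, h𝒮 h hh A hA, hw.image_subset hh hAX, ?_⟩
    rwa [himage h k hgk A hAX, Perm.coe_one, Set.image_id, Set.disjoint_image_iff h.injective]
  · obtain ⟨u, hu, hmove⟩ := hw.2.2.2.2.2 t ht ht1
    obtain ⟨k, hk, hgk⟩ := hblk u hu
    refine ⟨⇑u '' X, h𝒮 u hu X hX, hw.image_subset hu subset_rfl, ?_⟩
    rw [himage u k hgk X subset_rfl, Perm.image_eq_of_mem_fixingSubgroup_compl (hK hk)]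
    exact hw.disjoint_image_of_ne ht hu hmove

end IsPreWreath

theorem exists_le_surjective_of_disjoint_image {Z : Type*} {L N : Subgroup (Perm Z)} {A : Set Z}
    (hL : L ≤ fixingSubgroup (Perm Z) Aᶜ) {g : Perm Z} (hg : g ∈ N)
    (hLg : ∀ l ∈ L, l * g * l⁻¹ ∈ N) (hdisj : Disjoint (⇑g '' A) A) :
    ∃ S : Subgroup (Perm Z), S ≤ N ∧ ∃ φ : S →* L, Function.Surjective φ := by
  set L' := L.map (MulAut.conj g).toMonoidHom
  have hdisjoint : ∀ (a : L) (b : L'), (a : Perm Z).Disjoint b := fun a b =>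
    Perm.disjoint_of_mem_fixingSubgroup_compl (hL a.2)
      (map_conj_le_fixingSubgroup_compl_image hL g b.2) hdisj.symm
  set ψ := L.subtype.noncommCoprod L'.subtype fun a b => (hdisjoint a b).commute
  have hψ : Function.Injective ψ := by
    rw [injective_iff_map_eq_one]
    rintro ⟨a, b⟩ h
    obtain ⟨ha, hb⟩ := (hdisjoint a b).mul_eq_one_iff.mp h
    exact Prod.ext (Subtype.ext ha) (Subtype.ext hb)
  set e := MonoidHom.ofInjective hψ
  refine ⟨N ⊓ ψ.range, inf_le_left,
    (MonoidHom.fst L L').comp (e.symm.toMonoidHom.comp (Subgroup.inclusion inf_le_right)), ?_⟩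
  intro l
  set p : L × L' := (l, ⟨g * l⁻¹ * g⁻¹, l⁻¹, inv_mem l.2, rfl⟩)
  have hp : ψ p = l * g * l⁻¹ * g⁻¹ := by
    change (l : Perm Z) * (g * ((l⁻¹ : L) : Perm Z) * g⁻¹) = _
    rw [InvMemClass.coe_inv]
    group
  refine ⟨⟨ψ p, Subgroup.mem_inf.mpr ⟨hp ▸ mul_mem (hLg l l.2) (inv_mem hg), p, rfl⟩⟩, ?_⟩
  have he : e.symm ⟨ψ p, p, rfl⟩ = p :=
    e.symm_apply_eq.mpr (Subtype.ext (MonoidHom.ofInjective_apply hψ).symm)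
  exact congrArg Prod.fst he

section Generation

variable {Z : Type*} {H₁ : Subgroup (Perm Z)} {f : Perm Z}

theorem Hseq_map_conj_zpow (k i : ℤ) :
    (Hseq H₁ f i).map (MulAut.conj (f ^ k)).toMonoidHom = Hseq H₁ f (k + i) := by
  have hcomp : (MulAut.conj (f ^ k)).toMonoidHom.comp (MulAut.conj (f ^ (i - 1))).toMonoidHom =
      (MulAut.conj (f ^ (k + i - 1))).toMonoidHom := by
    ext g x
    simp [add_sub_assoc, zpow_add]
  rw [Hseq, Subgroup.map_map, hcomp, Hseq]

theorem Hseq_le_sup_zpowers (i : ℤ) : Hseq H₁ f i ≤ H₁ ⊔ Subgroup.zpowers f := by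
  rintro _ ⟨h, hh, rfl⟩
  have hf : f ^ (i - 1) ∈ H₁ ⊔ Subgroup.zpowers f :=
    Subgroup.mem_sup_right (Subgroup.zpow_mem_zpowers f (i - 1))
  exact mul_mem (mul_mem hf (Subgroup.mem_sup_left hh)) (inv_mem hf)

theorem Lseq_le_sup_zpowers (j : ℤ) : Lseq H₁ f j ≤ H₁ ⊔ Subgroup.zpowers f :=
  Subgroup.closure_le _ |>.mpr <| Set.iUnion₂_subset fun i _ => Hseq_le_sup_zpowers i

theorem Mgrp_eq_iSup : Mgrp H₁ f = ⨆ i, Hseq H₁ f i :=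
  (Subgroup.iSup_eq_closure _).symm

theorem Hseq_le_Mgrp (i : ℤ) : Hseq H₁ f i ≤ Mgrp H₁ f :=
  Mgrp_eq_iSup (H₁ := H₁) ▸ le_iSup (Hseq H₁ f) i

theorem le_Mgrp : H₁ ≤ Mgrp H₁ f := by
  intro h hh
  refine Hseq_le_Mgrp 1 ⟨h, hh, ?_⟩
  simp

theorem Mgrp_le_sup_zpowers : Mgrp H₁ f ≤ H₁ ⊔ Subgroup.zpowers f := by
  rw [Mgrp_eq_iSup]
  exact iSup_le Hseq_le_sup_zpowers

theorem zpow_mul_mul_inv_mem_Mgrp (k : ℤ) {m : Perm Z} (hm : m ∈ Mgrp H₁ f) :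
    f ^ k * m * (f ^ k)⁻¹ ∈ Mgrp H₁ f := by
  have hmap : (Mgrp H₁ f).map (MulAut.conj (f ^ k)).toMonoidHom ≤ Mgrp H₁ f := by
    rw [Mgrp_eq_iSup, Subgroup.map_iSup]
    exact iSup_le fun i => (Hseq_map_conj_zpow k i).le.trans (le_iSup (Hseq H₁ f) (k + i))
  exact hmap ⟨m, hm, rfl⟩

theorem mem_normalizer_Mgrp : f ∈ Subgroup.normalizer (Mgrp H₁ f : Set (Perm Z)) := by
  refine Subgroup.mem_normalizer_iff.mpr fun m => ⟨fun hm => ?_, fun hm => ?_⟩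
  · simpa using zpow_mul_mul_inv_mem_Mgrp 1 hm
  · have := zpow_mul_mul_inv_mem_Mgrp (-1) hm
    group at this
    exact this

theorem sup_zpowers_eq_Mgrp_sup : H₁ ⊔ Subgroup.zpowers f = Mgrp H₁ f ⊔ Subgroup.zpowers f :=
  le_antisymm (sup_le_sup_right le_Mgrp _) (sup_le Mgrp_le_sup_zpowers le_sup_right)

theorem exists_mul_zpow_of_mem_sup_zpowers {v : Perm Z} (hv : v ∈ H₁ ⊔ Subgroup.zpowers f) :
    ∃ m ∈ Mgrp H₁ f, ∃ k : ℤ, v = m * f ^ k := by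
  rw [sup_zpowers_eq_Mgrp_sup, ← SetLike.mem_coe, Subgroup.coe_mul_of_right_le_normalizer_left _ _
    (Subgroup.zpowers_le.mpr mem_normalizer_Mgrp)] at hv
  obtain ⟨m, hm, _, ⟨k, rfl⟩, rfl⟩ := hv
  exact ⟨m, hm, k, rfl⟩

theorem exists_finset_of_mem_Mgrp {g : Perm Z} (hg : g ∈ Mgrp H₁ f) :
    ∃ s : Finset ℤ, g ∈ ⨆ i ∈ s, Hseq H₁ f i := by
  rw [Mgrp_eq_iSup] at hg
  refine Subgroup.iSup_induction _ hg (C := fun x => ∃ s : Finset ℤ, x ∈ ⨆ i ∈ s, Hseq H₁ f i)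
    (fun i x hx => ⟨{i}, by simpa using hx⟩) ⟨∅, one_mem _⟩ ?_
  rintro x y ⟨s, hxs⟩ ⟨t, hyt⟩
  exact ⟨s ∪ t, mul_mem (biSup_mono (fun i => Finset.mem_union_left t) (f := Hseq H₁ f) hxs)
      (biSup_mono (fun i => Finset.mem_union_right s) (f := Hseq H₁ f) hyt)⟩

end Generation

def Yseq {Z : Type*} (Y₀ : Set Z) (f : Perm Z) (i : ℤ) : Set Z :=
  ⇑(f ^ i) '' Y₀

namespace InductiveSetting

variable {Z : Type*} {H₁ : Subgroup (Perm Z)} {f : Perm Z} {Y₀ W₀ : Set Z}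

theorem Yseq_mono (hs : InductiveSetting H₁ f Y₀ W₀) : Monotone (Yseq Y₀ f) := by
  refine monotone_int_of_le_succ fun i => ?_
  rw [Yseq, Yseq, ← Perm.zpow_image_image]
  exact Set.image_mono (hs.2.1.trans hs.2.2.1)

theorem isPreWreath_Hseq (hs : InductiveSetting H₁ f Y₀ W₀) (i : ℤ) :
    IsPreWreath (Yseq Y₀ f i) (Hseq H₁ f i) (Yseq Y₀ f (i - 1)) := by
  have h := hs.1.map_conj (f ^ (i - 1))
  rwa [Perm.zpow_image_image, sub_add_cancel] at h

theorem Hseq_le_fixingSubgroup_compl (hs : InductiveSetting H₁ f Y₀ W₀) {i j : ℤ} (hij : i ≤ j) :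
    Hseq H₁ f i ≤ fixingSubgroup (Perm Z) (Yseq Y₀ f j)ᶜ :=
  (hs.isPreWreath_Hseq i).le_fixingSubgroup.trans
    (fixingSubgroup_antitone _ _ (Set.compl_subset_compl.mpr (hs.Yseq_mono hij)))

theorem Lseq_le_fixingSubgroup_compl (hs : InductiveSetting H₁ f Y₀ W₀) (j : ℤ) :
    Lseq H₁ f j ≤ fixingSubgroup (Perm Z) (Yseq Y₀ f (j - 1))ᶜ :=
  Subgroup.closure_le _ |>.mpr <| Set.iUnion₂_subset fun _ hi =>
    hs.Hseq_le_fixingSubgroup_compl (Int.le_sub_one_of_lt hi)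

theorem Yseq_sub_one_subset_Supp_Hseq (hs : InductiveSetting H₁ f Y₀ W₀) (i : ℤ) :
    Yseq Y₀ f (i - 1) ⊆ Supp (Hseq H₁ f i) := by
  rw [Hseq, Supp_map_conj]
  exact Set.image_mono hs.2.1

theorem Supp_Hseq_subset_Yseq (hs : InductiveSetting H₁ f Y₀ W₀) (i : ℤ) :
    Supp (Hseq H₁ f i) ⊆ Yseq Y₀ f i := by
  rw [Hseq, Supp_map_conj, Yseq, ← sub_add_cancel i 1, ← Perm.zpow_image_image, add_sub_cancel_right]
  exact Set.image_mono hs.2.2.1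

theorem Supp_Hseq_mono (hs : InductiveSetting H₁ f Y₀ W₀) :
    Monotone fun i => Supp (Hseq H₁ f i) :=
  monotone_int_of_le_succ fun i => (hs.Supp_Hseq_subset_Yseq i).trans
    (by simpa using hs.Yseq_sub_one_subset_Supp_Hseq (i + 1))

theorem disjoint_Wseq_Supp_Hseq (hs : InductiveSetting H₁ f Y₀ W₀) (j : ℤ) :
    Disjoint (Wseq W₀ f j) (Supp (Hseq H₁ f j)) := by
  rw [Hseq, Supp_map_conj, Wseq, ← sub_add_cancel j 1, ← Perm.zpow_image_image,
    add_sub_cancel_right, Set.disjoint_image_iff (f ^ (j - 1)).injective,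
    Set.disjoint_iff_inter_eq_empty]
  exact hs.2.2.2.2.2.2

theorem Hseq_le_fixingSubgroup_Wseq (hs : InductiveSetting H₁ f Y₀ W₀) {i j : ℤ} (hij : i ≤ j) :
    Hseq H₁ f i ≤ fixingSubgroup (Perm Z) (Wseq W₀ f j) :=
  (le_fixingSubgroup_compl_Supp _).trans <| fixingSubgroup_antitone _ _ <|
    Set.subset_compl_iff_disjoint_right.mpr ((hs.disjoint_Wseq_Supp_Hseq j).mono_right
      (hs.Supp_Hseq_mono hij))

theorem exists_ne_one_mem_Mgrp_of_mul_zpow (hs : InductiveSetting H₁ f Y₀ W₀)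
    {N : Subgroup (Perm Z)}
    (hnorm : ∀ v ∈ H₁ ⊔ Subgroup.zpowers f, ∀ n ∈ N, v * n * v⁻¹ ∈ N)
    {n m : Perm Z} {k : ℤ} (hn : n ∈ N) (hm : m ∈ Mgrp H₁ f) (hk : 0 < k) (hnm : n = m * f ^ k) :
    ∃ n' ∈ N, n' ∈ Mgrp H₁ f ∧ n' ≠ 1 := by
  obtain ⟨s, hms⟩ := exists_finset_of_mem_Mgrp hm
  obtain ⟨t, ht⟩ := s.bddAbove
  obtain ⟨w, hw⟩ := hs.2.2.2.2.1
  set z := (f ^ t) w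
  have hzY : z ∈ Yseq Y₀ f (t + 1 - 1) := by
    rw [add_sub_cancel_right]
    exact ⟨w, hs.2.2.2.2.2.1 hw, rfl⟩
  obtain ⟨u, hu, huz⟩ := hs.Yseq_sub_one_subset_Supp_Hseq (t + 1) hzY
  have hfz : (f ^ k) z ∈ Wseq W₀ f (k + t) := by
    rw [Wseq, ← Perm.zpow_image_zpow_image]
    exact ⟨z, ⟨w, hw, rfl⟩, rfl⟩
  have hnz : n z = (f ^ k) z := by
    have hmW : m ∈ fixingSubgroup (Perm Z) (Wseq W₀ f (k + t)) :=
      iSup₂_le (fun i hi => hs.Hseq_le_fixingSubgroup_Wseq (by linarith [ht hi])) hms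
    rw [hnm, Perm.mul_apply]
    exact Perm.mem_fixingSubgroup_iff_apply_eq.mp hmW _ hfz
  have hunz : u.symm (n z) = n z := by
    rw [Equiv.symm_apply_eq, hnz]
    exact (Perm.mem_fixingSubgroup_iff_apply_eq.mp
      (hs.Hseq_le_fixingSubgroup_Wseq (by linarith) hu) _ hfz).symm
  refine ⟨n * u * n⁻¹ * u⁻¹, ?_, ?_, ?_⟩
  · rw [show n * u * n⁻¹ * u⁻¹ = n * (u * n⁻¹ * u⁻¹) by group]
    exact mul_mem hn (hnorm u (Hseq_le_sup_zpowers _ hu) _ (inv_mem hn))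
  · rw [hnm, show m * f ^ k * u * (m * f ^ k)⁻¹ * u⁻¹ = m * (f ^ k * u * (f ^ k)⁻¹) * m⁻¹ * u⁻¹ by
      group]
    have hu' := Hseq_le_Mgrp _ hu
    exact mul_mem (mul_mem (mul_mem hm (zpow_mul_mul_inv_mem_Mgrp k hu')) (inv_mem hm)) (inv_mem hu')
  · intro h
    have := congrArg (fun p : Perm Z => p (n z)) h
    simp [hunz] at this
    exact huz this

theorem exists_ne_one_mem_Mgrp (hs : InductiveSetting H₁ f Y₀ W₀) {N : Subgroup (Perm Z)}
    (hNV : N ≤ H₁ ⊔ Subgroup.zpowers f)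
    (hnorm : ∀ v ∈ H₁ ⊔ Subgroup.zpowers f, ∀ n ∈ N, v * n * v⁻¹ ∈ N) (hN : N ≠ ⊥) :
    ∃ n ∈ N, n ∈ Mgrp H₁ f ∧ n ≠ 1 := by
  obtain ⟨n, hn, hn1⟩ := N.bot_or_exists_ne_one.resolve_left hN
  obtain ⟨m, hm, k, rfl⟩ := exists_mul_zpow_of_mem_sup_zpowers (hNV hn)
  rcases lt_trichotomy k 0 with hk | rfl | hk
  · exact hs.exists_ne_one_mem_Mgrp_of_mul_zpow hnorm (inv_mem hn)
      (zpow_mul_mul_inv_mem_Mgrp (-k) (inv_mem hm)) (neg_pos.mpr hk) (by group)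
  · exact ⟨_, hn, by simpa using hm, hn1⟩
  · exact hs.exists_ne_one_mem_Mgrp_of_mul_zpow hnorm hn hm hk rfl

theorem exists_disjoint_image_of_mem_iSup (hs : InductiveSetting H₁ f Y₀ W₀) (s : Finset ℤ) :
    ∀ b, (∀ i ∈ s, i ≤ b) → ∀ g ∈ ⨆ i ∈ s, Hseq H₁ f i, g ≠ 1 →
      ∃ c ∈ H₁ ⊔ Subgroup.zpowers f, ⇑c '' Yseq Y₀ f (-1) ⊆ Yseq Y₀ f b ∧
        Disjoint (⇑g '' (⇑c '' Yseq Y₀ f (-1))) (⇑c '' Yseq Y₀ f (-1)) := by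
  induction s using Finset.induction_on_max with
  | empty =>
    intro b _ g hg hg1
    simp only [Finset.notMem_empty, iSup_false, iSup_bot, Subgroup.mem_bot] at hg
    exact absurd hg hg1
  | insert a s hlt ih =>
    intro b hb g hg hg1
    rw [Finset.iSup_insert, sup_comm] at hg
    set 𝒮 := {A | ∃ c ∈ H₁ ⊔ Subgroup.zpowers f, A = ⇑c '' Yseq Y₀ f (-1)}
    have hK : ⨆ i ∈ s, Hseq H₁ f i ≤ fixingSubgroup (Perm Z) (Yseq Y₀ f (a - 1))ᶜ :=
      iSup₂_le fun i hi => hs.Hseq_le_fixingSubgroup_compl (by linarith [hlt i hi])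
    have h𝒮 : ∀ h ∈ Hseq H₁ f a, ∀ A ∈ 𝒮, ⇑h '' A ∈ 𝒮 := by
      rintro h hh _ ⟨c, hc, rfl⟩
      exact ⟨h * c, mul_mem (Hseq_le_sup_zpowers a hh) hc, by rw [Perm.coe_mul, Set.image_comp]⟩
    have hX : Yseq Y₀ f (a - 1) ∈ 𝒮 :=
      ⟨f ^ a, Subgroup.mem_sup_right (Subgroup.zpow_mem_zpowers f a),
        by rw [Yseq, Yseq, Perm.zpow_image_zpow_image, sub_eq_add_neg]⟩
    have hK𝒮 : ∀ k ∈ ⨆ i ∈ s, Hseq H₁ f i, k ≠ 1 →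
        ∃ A ∈ 𝒮, A ⊆ Yseq Y₀ f (a - 1) ∧ Disjoint (⇑k '' A) A := by
      intro k hk hk1
      obtain ⟨c, hc, hsub, hdisj⟩ := ih (a - 1) (fun i hi => by linarith [hlt i hi]) k hk hk1
      exact ⟨_, ⟨c, hc, rfl⟩, hsub, hdisj⟩
    obtain ⟨_, ⟨c, hc, rfl⟩, hsub, hdisj⟩ :=
      (hs.isPreWreath_Hseq a).exists_disjoint_image_of_mem_sup hK h𝒮 hX hK𝒮 hg hg1
    exact ⟨c, hc, hsub.trans (hs.Yseq_mono (hb a (Finset.mem_insert_self a s))), hdisj⟩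

theorem exists_disjoint_image_of_mem_Mgrp (hs : InductiveSetting H₁ f Y₀ W₀) {g : Perm Z}
    (hg : g ∈ Mgrp H₁ f) (hg1 : g ≠ 1) :
    ∃ c ∈ H₁ ⊔ Subgroup.zpowers f,
      Disjoint (⇑g '' (⇑c '' Yseq Y₀ f (-1))) (⇑c '' Yseq Y₀ f (-1)) := by
  obtain ⟨s, hgs⟩ := exists_finset_of_mem_Mgrp hg
  obtain ⟨b, hb⟩ := s.bddAbove
  obtain ⟨c, hc, -, hdisj⟩ := hs.exists_disjoint_image_of_mem_iSup s b (fun i hi => hb hi) g hgs hg1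
  exact ⟨c, hc, hdisj⟩

end InductiveSetting

/-- In the inductive setting, with `V = ⟨H₁, f⟩`: every nontrivial
normal subgroup `N` of `V` contains a subgroup that surjects onto `L₀`. -/
theorem stmt16 {Z : Type*} (H₁ : Subgroup (Equiv.Perm Z)) (f : Equiv.Perm Z)
    (Y₀ W₀ : Set Z) (hsetting : InductiveSetting H₁ f Y₀ W₀) :
    ∀ N : Subgroup (Equiv.Perm Z), N ≤ H₁ ⊔ Subgroup.zpowers f →
      (∀ v ∈ H₁ ⊔ Subgroup.zpowers f, ∀ n ∈ N, v * n * v⁻¹ ∈ N) → N ≠ ⊥ →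
      ∃ S : Subgroup (Equiv.Perm Z), S ≤ N ∧
        ∃ φ : S →* Lseq H₁ f 0, Function.Surjective φ := by
  intro N hNV hnorm hN
  obtain ⟨n, hn, hnM, hn1⟩ := hsetting.exists_ne_one_mem_Mgrp hNV hnorm hN
  obtain ⟨c, hc, hdisj⟩ := hsetting.exists_disjoint_image_of_mem_Mgrp hnM hn1
  have hcn : c⁻¹ * n * c ∈ N := by simpa using hnorm c⁻¹ (inv_mem hc) n hn
  have hL := hsetting.Lseq_le_fixingSubgroup_compl 0
  rw [zero_sub] at hL
  exact exists_le_surjective_of_disjoint_image hL hcn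
    (fun l hl => hnorm l (Lseq_le_sup_zpowers 0 hl) _ hcn) (disjoint_image_conj hdisj)
end

section
/- Let I = [0,1] and let I₁, I₂, I₃, I₄ be intervals in I with I₁ nonempty, I₁ contained in the interior of I₂, I₂ contained in the interior of I₃ = [a,b], and I₃ contained in the interior of I₄. Let h be a one bump function with bump interval I₃ and with I₂ = [c,d] a fundamental domain of h (i.e., h(c) = d or h(d) = c). Then (I, I₄, ⟨h⟩, I₁) is a pre-wreath structure, where ⟨h⟩ is the cyclic subgroup of the group of bijections of I generated by h. -/
/-!
Write `h c = d` with `c < d` (otherwise replace `h` by `h⁻¹`). Monotonicity gives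
`h x > h c = d` for every `x > c`, and inductively every forward iterate `hⁿ x` (`n ≥ 1`)
of such a point stays above `d`. Hence the translates of the fundamental domain `(c, d)` by
nonzero powers of `h` miss `(c, d)`, so those of `I₁ ⊆ (c, d)` miss `I₁`; this gives
conditions (ii) and (iii) of a pre-wreath structure at once.
-/

open Set

theorem isPreWreath_zpowers_of_disjoint {Z : Type*} {Y X : Set Z} {f : Equiv.Perm Z}
    (hfix : ∀ z ∉ Y, f z = z) (hXY : X ⊆ Y) (hX : X.Nonempty)
    (hdisj : ∀ n : ℤ, n ≠ 0 → Disjoint (⇑(f ^ n) '' X) X) :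
    IsPreWreath Y (Subgroup.zpowers f) X := by
  have image_ne : ∀ n : ℤ, n ≠ 0 → ⇑(f ^ n) '' X ≠ X := fun n hn hfX => by
    have := hdisj n hn
    rw [hfX, disjoint_self] at this
    exact hX.ne_empty this
  refine ⟨?_, ?_, hXY, hX, ?_, ?_⟩
  · rw [Ne, Subgroup.zpowers_eq_bot]
    rintro rfl
    exact image_ne 1 one_ne_zero (by simp)
  · exact Subgroup.forall_mem_zpowers.mpr fun n z hz =>
      Function.IsFixedPt.perm_zpow (hfix z hz) n
  · refine Subgroup.forall_mem_zpowers.mpr fun n hmeet => ?_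
    obtain rfl : n = 0 := by
      by_contra hn
      exact not_disjoint_iff_nonempty_inter.mpr hmeet (hdisj n hn)
    simp
  · refine Subgroup.forall_mem_zpowers.mpr fun n hn => ⟨1, Subgroup.one_mem _, ?_⟩
    rw [Equiv.Perm.coe_one, image_id]
    exact image_ne n (by rintro rfl; exact hn (zpow_zero f))

section StrictMonoPerm

variable {α : Type*} [LinearOrder α] {f : Equiv.Perm α}

theorem StrictMono.perm_inv (hf : StrictMono f) : StrictMono ⇑f⁻¹ := fun x y hxy => by
  rwa [← hf.lt_iff_lt, Equiv.Perm.coe_inv, f.apply_symm_apply, f.apply_symm_apply]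

theorem lt_pow_succ_apply_of_apply_eq (hf : StrictMono f) {c d x : α} (hcd : f c = d)
    (hlt : c < d) (hx : c < x) (n : ℕ) : d < (f ^ (n + 1)) x := by
  induction n with
  | zero => simpa [hcd] using hf hx
  | succ n ih =>
    rw [pow_succ', Equiv.Perm.mul_apply, ← hcd]
    exact hf (hlt.trans ih)

theorem disjoint_zpow_image_Ioo (hf : StrictMono f) {c d : α} (hlt : c < d)
    (hfund : f c = d ∨ f d = c) {n : ℤ} (hn : n ≠ 0) :
    Disjoint (⇑(f ^ n) '' Ioo c d) (Ioo c d) := by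
  wlog hcd : f c = d generalizing f n
  · have hcd' : f⁻¹ c = d := by
      rw [Equiv.Perm.inv_eq_iff_eq]
      exact hfund.resolve_left hcd |>.symm
    simpa [inv_zpow'] using
      this hf.perm_inv (Or.inl hcd') (neg_ne_zero.mpr hn) hcd'
  rw [disjoint_left]
  rintro _ ⟨x, hx, rfl⟩ hfx
  obtain ⟨m, rfl | rfl⟩ := n.eq_nat_or_neg <;>
    obtain ⟨k, rfl⟩ := Nat.exists_eq_add_one_of_ne_zero (show m ≠ 0 by omega)
  · rw [zpow_natCast] at hfx
    exact (lt_pow_succ_apply_of_apply_eq hf hcd hlt hx.1 k).not_gt hfx.2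
  · have hback := lt_pow_succ_apply_of_apply_eq hf hcd hlt hfx.1 k
    rw [zpow_neg, zpow_natCast, Equiv.Perm.coe_inv, Equiv.apply_symm_apply] at hback
    exact hback.not_gt hx.2

end StrictMonoPerm

theorem stmt18_general (p q c d a b e e' : ℝ)
    (hI₁ : p ≤ q) (hI₁₂ : c < p ∧ q < d) (hI₂₃ : a < c ∧ d < b)
    (hI₃₄ : e < a ∧ b < e')
    (h : Equiv.Perm (Set.Icc (0 : ℝ) 1))
    (hmono : StrictMono (fun z : Set.Icc (0 : ℝ) 1 => ((h z : Set.Icc (0 : ℝ) 1) : ℝ)))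
    (hfix : ∀ z : Set.Icc (0 : ℝ) 1, (z : ℝ) ∉ Set.Ioo a b → h z = z)
    (hfund : ∃ (hc : c ∈ Set.Icc (0 : ℝ) 1) (hd : d ∈ Set.Icc (0 : ℝ) 1),
      h ⟨c, hc⟩ = ⟨d, hd⟩ ∨ h ⟨d, hd⟩ = ⟨c, hc⟩) :
    IsPreWreath
      {z : Set.Icc (0 : ℝ) 1 | (z : ℝ) ∈ Set.Icc e e'}
      (Subgroup.zpowers h)
      {z : Set.Icc (0 : ℝ) 1 | (z : ℝ) ∈ Set.Icc p q} := by
  obtain ⟨hc, hd, hcd⟩ := hfund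
  have hp : p ∈ Icc (0 : ℝ) 1 := ⟨hc.1.trans hI₁₂.1.le, hI₁.trans (hI₁₂.2.le.trans hd.2)⟩
  have hX : {z : Icc (0 : ℝ) 1 | (z : ℝ) ∈ Icc p q} ⊆ Ioo ⟨c, hc⟩ ⟨d, hd⟩ :=
    fun z hz => ⟨hI₁₂.1.trans_le hz.1, hz.2.trans_lt hI₁₂.2⟩
  have hcd_lt : (⟨c, hc⟩ : Icc (0 : ℝ) 1) < ⟨d, hd⟩ := (hI₁₂.1.trans_le hI₁).trans hI₁₂.2
  refine isPreWreath_zpowers_of_disjoint (fun z hz => hfix z fun hab => hz ?_)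
    (fun z hz => ?_) ⟨⟨p, hp⟩, le_rfl, hI₁⟩ fun n hn =>
      (disjoint_zpow_image_Ioo hmono hcd_lt hcd hn).mono (image_mono hX) hX
  · exact ⟨hI₃₄.1.le.trans hab.1.le, hab.2.le.trans hI₃₄.2.le⟩
  · exact ⟨by linarith [hz.1], by linarith [hz.2]⟩

/-- Let `I = [0,1]` and let `I₁ = [p,q]`, `I₂ = [c,d]`, `I₃ = [a,b]`,
`I₄ = [e,e']` be intervals in `I` with `I₁` nonempty, `I₁` in the interior of `I₂`,
`I₂` in the interior of `I₃`, and `I₃` in the interior of `I₄`.  If `h` is a one bump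
function (an orientation-preserving self-bijection of `I`) with bump interval `I₃` and
fundamental domain `I₂` (i.e. `h(c) = d` or `h(d) = c`), then `(I, I₄, ⟨h⟩, I₁)` is a
pre-wreath structure. -/
theorem stmt18 (p q c d a b e e' : ℝ)
    (hI₁ : p ≤ q) (hI₁₂ : c < p ∧ q < d) (hI₂₃ : a < c ∧ d < b)
    (hI₃₄ : e < a ∧ b < e') (hI₄ : 0 ≤ e ∧ e' ≤ 1)
    (h : Equiv.Perm (Set.Icc (0 : ℝ) 1))
    (hmono : StrictMono (fun z : Set.Icc (0 : ℝ) 1 => ((h z : Set.Icc (0 : ℝ) 1) : ℝ)))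
    (hfix : ∀ z : Set.Icc (0 : ℝ) 1, (z : ℝ) ∉ Set.Ioo a b → h z = z)
    (hmoves : ∀ z : Set.Icc (0 : ℝ) 1, (z : ℝ) ∈ Set.Ioo a b → h z ≠ z)
    (hfund : ∃ (hc : c ∈ Set.Icc (0 : ℝ) 1) (hd : d ∈ Set.Icc (0 : ℝ) 1),
      h ⟨c, hc⟩ = ⟨d, hd⟩ ∨ h ⟨d, hd⟩ = ⟨c, hc⟩) :
    IsPreWreath
      {z : Set.Icc (0 : ℝ) 1 | (z : ℝ) ∈ Set.Icc e e'}
      (Subgroup.zpowers h)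
      {z : Set.Icc (0 : ℝ) 1 | (z : ℝ) ∈ Set.Icc p q} :=
  stmt18_general p q c d a b e e' hI₁ hI₁₂ hI₂₃ hI₃₄ h hmono hfix hfund
end

section
/- Let a < b be real numbers and let u, v, w be piecewise linear, orientation-preserving self-homeomorphisms of [a,b], each fixing a and b and having no fixed point in the open interval (a,b). Let m and n be integers and suppose that both w⁻ᵐvwᵐ and w⁻ⁿvwⁿ commute with u. Then w^{n−m} commutes with v. -/
/-- A piecewise linear, orientation-preserving self-homeomorphism of `[a,b]` fixing `a`
and `b` and having no fixed point in the open interval `(a,b)`: a strictly increasing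
bijection of `[a,b]` that is affine on each piece of some finite partition of `[a,b]`. -/
def IsOneBumpPL (a b : ℝ) (g : Equiv.Perm (Set.Icc a b)) : Prop :=
  StrictMono (fun z : Set.Icc a b => ((g z : Set.Icc a b) : ℝ)) ∧
  (∀ z : Set.Icc a b, (z : ℝ) = a ∨ (z : ℝ) = b → g z = z) ∧
  (∀ z : Set.Icc a b, a < (z : ℝ) → (z : ℝ) < b → g z ≠ z) ∧
  ∃ (n : ℕ) (x : ℕ → ℝ), 0 < n ∧ x 0 = a ∧ x n = b ∧ (∀ i < n, x i < x (i + 1)) ∧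
    ∀ i < n, ∃ s t : ℝ, ∀ z : Set.Icc a b,
      x i ≤ (z : ℝ) → (z : ℝ) ≤ x (i + 1) →
        ((g z : Set.Icc a b) : ℝ) = s * (z : ℝ) + t

/-
Near the fixed endpoint `a` a piecewise linear map is `z ↦ a + s (z - a)`, and this initial slope
`s` is multiplicative, so the two products of the conjugates `w⁻ᵐvwᵐ` and `w⁻ⁿvwⁿ` agree near `a`.
Rigidity: two permutations commuting with an increasing `u` without fixed points in `(a,b)` that
agree near `a` agree everywhere, since a power of `u` carries any point below `b` into the region
of agreement, and a permutation is determined by its values off one point. Hence the conjugates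
commute; conjugating by `wᵐ`, `v` commutes with `w⁻⁽ⁿ⁻ᵐ⁾vwⁿ⁻ᵐ`, which has the initial slope of
`v`, and rigidity with `u := v` makes the two equal.
-/

open Set Equiv

theorem Equiv.Perm.eq_of_subsingleton_ne {α : Type*} {g h : Perm α}
    (H : {z | g z ≠ h z}.Subsingleton) : g = h := by
  ext z
  by_contra hz
  obtain ⟨y, hy⟩ := h.surjective (g z)
  have hyz : y ≠ z := by rintro rfl; exact hz hy.symm
  refine hyz (H (fun hgy => hyz (g.injective ?_)) hz)
  rw [hgy, hy]

theorem Equiv.Perm.exists_pow_apply_lt_of_apply_lt {α : Type*}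
    [ConditionallyCompleteLinearOrder α] {u : Perm α} (hu : StrictMono u) {z c : α}
    (hz : u z < z) (hfix : ∀ x, c ≤ x → x ≤ z → u x ≠ x) : ∃ k : ℕ, (u ^ k) z < c := by
  by_contra! h
  have hbdd : BddBelow (range fun k : ℕ => (u ^ k) z) := ⟨c, by rintro _ ⟨k, rfl⟩; exact h k⟩
  set L := ⨅ k : ℕ, (u ^ k) z
  have hcL : c ≤ L := le_ciInf h
  have hLz : L ≤ z := by simpa using ciInf_le hbdd 0
  -- `u L` is again a lower bound of the orbit, so the infimum `L` is pushed down by `u`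
  have huL : u L < L := by
    refine lt_of_le_of_ne (le_ciInf fun k => ?_) (hfix L hcL hLz)
    cases k with
    | zero => simpa using (hu.monotone hLz).trans hz.le
    | succ k => rw [pow_succ', Perm.mul_apply]; exact hu.monotone (ciInf_le hbdd k)
  obtain ⟨k, hk⟩ := exists_lt_of_ciInf_lt (show L < u⁻¹ L from hu.lt_iff_lt.1 (by simpa using huL))
  have hk' : (u ^ (k + 1)) z < L := by rw [pow_succ', Perm.mul_apply]; simpa using hu hk
  exact hk'.not_ge (ciInf_le hbdd (k + 1))

section Interval

variable {a b : ℝ}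

theorem IsOneBumpPL.strictMono {g : Perm (Icc a b)} (hg : IsOneBumpPL a b g) : StrictMono g :=
  fun _ _ h => Subtype.coe_lt_coe.1 (hg.1 h)

theorem Equiv.Perm.exists_zpow_apply_lt {u : Perm (Icc a b)} (hu : StrictMono u)
    (hfix : ∀ z : Icc a b, a < (z : ℝ) → (z : ℝ) < b → u z ≠ z) {c : ℝ} (hc : a < c)
    {z : Icc a b} (hz : (z : ℝ) < b) : ∃ k : ℤ, ((u ^ k) z : ℝ) < c := by
  obtain hzc | hzc := lt_or_ge (z : ℝ) c
  · exact ⟨0, by simpa using hzc⟩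
  -- makes `Icc a b` a conditionally complete linear order
  have : Fact (a ≤ b) := ⟨z.2.1.trans z.2.2⟩
  let c' : Icc a b := ⟨c, hc.le, hzc.trans z.2.2⟩
  have hfix' : ∀ g : Perm (Icc a b), (∀ x, g x = x → u x = x) → ∀ x, c' ≤ x → x ≤ z → g x ≠ x :=
    fun g hg x hcx hxz hgx =>
      hfix x (hc.trans_le hcx) ((Subtype.coe_le_coe.2 hxz).trans_lt hz) (hg x hgx)
  rcases (hfix z (hc.trans_le hzc) hz).lt_or_gt with hlt | hgt
  · obtain ⟨k, hk⟩ := Perm.exists_pow_apply_lt_of_apply_lt hu hlt (hfix' u fun _ => id)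
    exact ⟨k, by rw [zpow_natCast]; exact hk⟩
  · have hu' : StrictMono ⇑u⁻¹ := fun x y hxy => hu.lt_iff_lt.1 (by simpa using hxy)
    obtain ⟨k, hk⟩ := Perm.exists_pow_apply_lt_of_apply_lt hu'
      (hu.lt_iff_lt.1 (by simpa using hgt))
      (hfix' u⁻¹ fun x hx => (Perm.inv_eq_iff_eq.1 hx).symm)
    exact ⟨-k, by rw [zpow_neg, zpow_natCast, ← inv_pow]; exact hk⟩

theorem eq_of_commute_of_exists_eqOn {u g h : Perm (Icc a b)} (hu : StrictMono u)
    (hfix : ∀ z : Icc a b, a < (z : ℝ) → (z : ℝ) < b → u z ≠ z)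
    (hg : Commute g u) (hh : Commute h u) (hgh : ∃ c > a, EqOn g h {z | (z : ℝ) < c}) :
    g = h := by
  obtain ⟨c, hc, hgh⟩ := hgh
  have hlt : ∀ z : Icc a b, (z : ℝ) < b → g z = h z := by
    intro z hz
    obtain ⟨k, hk⟩ := Perm.exists_zpow_apply_lt hu hfix hc hz
    have hcomm : ∀ f : Perm (Icc a b), Commute f u → f ((u ^ k) z) = (u ^ k) (f z) :=
      fun f hf => by simpa using DFunLike.congr_fun (hf.zpow_right k).eq z
    exact (u ^ k).injective (by rw [← hcomm g hg, ← hcomm h hh]; exact hgh hk)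
  refine Perm.eq_of_subsingleton_ne fun x hx y hy => Subtype.ext ?_
  have hb : ∀ z : Icc a b, g z ≠ h z → (z : ℝ) = b :=
    fun z hz => (z.2.2.lt_or_eq.resolve_left fun h => hz (hlt z h))
  rw [hb x hx, hb y hy]

def HasInitialSlope (g : Perm (Icc a b)) (s : ℝ) : Prop :=
  0 < s ∧ ∃ c > a, ∀ z : Icc a b, (z : ℝ) < c → (g z : ℝ) = a + s * (z - a)

namespace HasInitialSlope

variable {g h : Perm (Icc a b)} {s t : ℝ}

theorem one (a b : ℝ) : HasInitialSlope (1 : Perm (Icc a b)) 1 :=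
  ⟨one_pos, a + 1, by linarith, fun z _ => by simp⟩

theorem mul (hg : HasInitialSlope g s) (hh : HasInitialSlope h t) :
    HasInitialSlope (g * h) (s * t) := by
  obtain ⟨hs, c, hc, hg⟩ := hg
  obtain ⟨ht, d, hd, hh⟩ := hh
  have hct : 0 < (c - a) / t := div_pos (sub_pos.2 hc) ht
  refine ⟨mul_pos hs ht, min d (a + (c - a) / t), lt_min hd (by linarith), fun z hz => ?_⟩
  have hzd : (z : ℝ) < d := hz.trans_le (min_le_left _ _)
  have hzc : t * (z - a) < c - a :=
    (lt_div_iff₀' ht).1 (by linarith [hz.trans_le (min_le_right _ _)])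
  rw [Perm.mul_apply, hg _ (by rw [hh z hzd]; linarith), hh z hzd]
  ring

theorem inv (hab : a < b) (hg : HasInitialSlope g s) : HasInitialSlope g⁻¹ s⁻¹ := by
  obtain ⟨hs, c, hc, hg⟩ := hg
  have hcb : 0 < min c b - a := sub_pos.2 (lt_min hc hab)
  refine ⟨inv_pos.2 hs, a + s * (min c b - a), by nlinarith, fun y hy => ?_⟩
  have hya : 0 ≤ (y - a : ℝ) / s := div_nonneg (sub_nonneg.2 y.2.1) hs.le
  have hyc : (y - a : ℝ) / s < min c b - a := (div_lt_iff₀' hs).2 (by linarith)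
  let x : Icc a b := ⟨a + (y - a) / s, by linarith, by linarith [min_le_right c b]⟩
  have hx : g x = y := Subtype.ext <| by
    rw [hg x (by simp only [x]; linarith [min_le_left c b])]
    show a + s * (a + (y - a) / s - a) = y
    field_simp
    ring
  rw [Perm.inv_eq_iff_eq.2 hx.symm]
  simp only [x]
  field_simp

theorem zpow (hab : a < b) (hg : HasInitialSlope g s) (k : ℤ) :
    HasInitialSlope (g ^ k) (s ^ k) := by
  induction k using Int.induction_on with
  | zero => simpa using one a b
  | succ i ih => rw [zpow_add_one, zpow_add_one₀ hg.1.ne']; exact ih.mul hg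
  | pred i ih => rw [zpow_sub_one, zpow_sub_one₀ hg.1.ne']; exact ih.mul (hg.inv hab)

theorem conj_zpow (hab : a < b) (hg : HasInitialSlope g s) (hh : HasInitialSlope h t) (k : ℤ) :
    HasInitialSlope (h ^ (-k) * g * h ^ k) s := by
  convert ((hh.zpow hab (-k)).mul hg).mul (hh.zpow hab k) using 1
  have := hh.1.ne'
  rw [zpow_neg]
  field_simp

theorem exists_eqOn (hg : HasInitialSlope g s) (hh : HasInitialSlope h s) :
    ∃ c > a, EqOn g h {z | (z : ℝ) < c} := by
  obtain ⟨-, c, hc, hg⟩ := hg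
  obtain ⟨-, d, hd, hh⟩ := hh
  exact ⟨min c d, lt_min hc hd, fun z hz => Subtype.ext <|
    (hg z (hz.trans_le (min_le_left _ _))).trans (hh z (hz.trans_le (min_le_right _ _))).symm⟩

end HasInitialSlope

theorem IsOneBumpPL.exists_hasInitialSlope (hab : a < b) {g : Perm (Icc a b)}
    (hg : IsOneBumpPL a b g) : ∃ s, HasInitialSlope g s := by
  obtain ⟨hmono, hfix, -, N, x, hN, hx0, -, hx, hpieces⟩ := hg
  obtain ⟨s, t, hst⟩ := hpieces 0 hN
  have hx1 : a < x 1 := hx0 ▸ hx 0 hN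
  let p : Icc a b := ⟨a, le_rfl, hab.le⟩
  have hp : (g p : ℝ) = a := congrArg Subtype.val (hfix p (Or.inl rfl))
  have hlin : ∀ z : Icc a b, (z : ℝ) < x 1 → (g z : ℝ) = a + s * (z - a) := by
    intro z hz
    have hpa := hst p hx0.le (by simpa [p] using hx1.le)
    rw [hst z (hx0 ▸ z.2.1) hz.le]
    linarith
  have hq : a < (a + min (x 1) b) / 2 := by linarith [lt_min hx1 hab]
  let q : Icc a b := ⟨(a + min (x 1) b) / 2, hq.le, by linarith [min_le_right (x 1) b]⟩
  have hpq : (g p : ℝ) < g q := hmono (Subtype.mk_lt_mk.2 hq)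
  rw [hp, hlin q (by simp only [q]; linarith [min_le_left (x 1) b])] at hpq
  exact ⟨s, pos_of_mul_pos_left (b := (q : ℝ) - a) (by linarith) (sub_nonneg.2 q.2.1),
    x 1, hx1, hlin⟩

end Interval

/-- **the sublemma.** If `u`, `v`, `w` are piecewise linear,
orientation-preserving self-homeomorphisms of `[a,b]`, each fixing `a` and `b` and with
no fixed point in `(a,b)`, and if both `w⁻ᵐvwᵐ` and `w⁻ⁿvwⁿ` commute with `u`, then
`w^(n-m)` commutes with `v`. -/
theorem stmt19 (a b : ℝ) (hab : a < b) (u v w : Equiv.Perm (Set.Icc a b))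
    (hu : IsOneBumpPL a b u) (hv : IsOneBumpPL a b v) (hw : IsOneBumpPL a b w)
    (m n : ℤ)
    (hm : Commute (w ^ (-m) * v * w ^ m) u)
    (hn : Commute (w ^ (-n) * v * w ^ n) u) :
    Commute (w ^ (n - m)) v := by
  obtain ⟨s, hvs⟩ := hv.exists_hasInitialSlope hab
  obtain ⟨t, hwt⟩ := hw.exists_hasInitialSlope hab
  have hconj : ∀ k : ℤ, HasInitialSlope (w ^ (-k) * v * w ^ k) s := hvs.conj_zpow hab hwt
  have hmn : Commute (w ^ (-m) * v * w ^ m) (w ^ (-n) * v * w ^ n) :=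
    eq_of_commute_of_exists_eqOn hu.strictMono hu.2.2.1 (hm.mul_left hn) (hn.mul_left hm)
      (((hconj m).mul (hconj n)).exists_eqOn ((hconj n).mul (hconj m)))
  have hvc : Commute (w ^ (-(n - m)) * v * w ^ (n - m)) v := by
    have hconj_m : w ^ m * (w ^ (-m) * v * w ^ m) * (w ^ m)⁻¹ = v := by group
    have hconj_n : w ^ m * (w ^ (-n) * v * w ^ n) * (w ^ m)⁻¹ =
        w ^ (-(n - m)) * v * w ^ (n - m) := by group
    simpa only [hconj_m, hconj_n] using (hmn.conj (w ^ m)).symm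
  have hcv : w ^ (-(n - m)) * v * w ^ (n - m) = v :=
    eq_of_commute_of_exists_eqOn hv.strictMono hv.2.2.1 hvc (Commute.refl v)
      ((hconj (n - m)).exists_eqOn hvs)
  calc w ^ (n - m) * v = w ^ (n - m) * (w ^ (-(n - m)) * v * w ^ (n - m)) := by rw [hcv]
    _ = v * w ^ (n - m) := by group
end
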